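/- Let K be a compact subgroup of O(n) with Haar measure and let ρ : ℝⁿ → ℝ^ℓ be given by a generating set ρ₁, …, ρ_ℓ of the K-invariant polynomials. Then for x, x' ∈ ℝⁿ: ρ(x) = ρ(x') if and only if x' = k·x for some k ∈ K (i.e., ρ separates K-orbits). -/

import Mathlib

/-!
If `x` and `x'` lie in different `K`-orbits, the orbits are disjoint compact sets, so by Urysohn
and Stone–Weierstrass some polynomial `p` is `≤ 1/3` on the first and `≥ 2/3` on the second.
Its Haar average `q(y) = ∫ p(k⁻¹ y) dk` is `K`-invariant and still separates `x` from `x'`;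
it is again a polynomial, because the coefficients of `y ↦ p(A y)` are polynomials in the entries
of the matrix `A` and are supported in a finite set independent of `A`, so `p` can be averaged
coefficientwise. Since the `ρⱼ` generate the invariants, `q` is a polynomial
in them, so `ρ(x) = ρ(x')` would force `q(x) = q(x')`.
-/

open MeasureTheory Matrix MvPolynomial

namespace MvPolynomial

variable {σ R : Type*} [CommSemiring R]

theorem eval_eq_of_mem_adjoin {s : Set (MvPolynomial σ R)} {x x' : σ → R}
    (h : ∀ p ∈ s, eval x p = eval x' p) {q : MvPolynomial σ R} (hq : q ∈ Algebra.adjoin R s) :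
    eval x q = eval x' q :=
  Algebra.adjoin_le (s := s) (S := AlgHom.equalizer (aeval x) (aeval x')) h hq

variable [Fintype σ]

noncomputable def linearSubst (M : Matrix σ σ R) : MvPolynomial σ R →ₐ[R] MvPolynomial σ R :=
  bind₁ fun i => ∑ j, C (M i j) * X j

theorem eval_linearSubst (M : Matrix σ σ R) (p : MvPolynomial σ R) (v : σ → R) :
    eval v (linearSubst M p) = eval (M *ᵥ v) p := by
  simp only [linearSubst, eval, eval₂Hom_bind₁]
  congr 2 with i
  simp [mulVec, dotProduct]

theorem map_linearSubst {S : Type*} [CommSemiring S] (f : R →+* S) (M : Matrix σ σ R)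
    (p : MvPolynomial σ R) : map f (linearSubst M p) = linearSubst (M.map f) (map f p) := by
  simp [linearSubst, map_bind₁]

/-- Every `linearSubst M p` is a specialization of this, so its coefficients are polynomial in the
entries of `M`. -/
noncomputable def genericLinearSubst (p : MvPolynomial σ R) :
    MvPolynomial σ (MvPolynomial (σ × σ) R) :=
  linearSubst (mvPolynomialX σ σ R) (map C p)

theorem coeff_linearSubst (M : Matrix σ σ R) (p : MvPolynomial σ R) (m : σ →₀ ℕ) :
    coeff m (linearSubst M p) =
      eval (fun ij : σ × σ => M ij.1 ij.2) (coeff m (genericLinearSubst p)) := by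
  have hp : map (eval fun ij : σ × σ => M ij.1 ij.2) (map C p) = p := by
    rw [map_map, show (eval _).comp C = RingHom.id R from RingHom.ext eval_C, map_id]
  rw [← coeff_map, genericLinearSubst, map_linearSubst, hp]
  exact congrArg (fun N => coeff m (linearSubst N p))
    (mvPolynomialX_map_eval₂ (RingHom.id R) M).symm

theorem support_linearSubst_subset (M : Matrix σ σ R) (p : MvPolynomial σ R) :
    (linearSubst M p).support ⊆ (genericLinearSubst p).support := by
  intro m hm
  rw [mem_support_iff, coeff_linearSubst] at hm
  exact mem_support_iff.mpr fun h => hm (by rw [h, map_zero])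

theorem continuous_coeff_linearSubst [TopologicalSpace R] [IsTopologicalSemiring R]
    (p : MvPolynomial σ R) (m : σ →₀ ℕ) :
    Continuous fun M : Matrix σ σ R => coeff m (linearSubst M p) := by
  simp only [coeff_linearSubst]
  exact (continuous_eval _).comp (continuous_pi fun ij => continuous_apply_apply ij.1 ij.2)

theorem exists_eval_eq_integral_eval_mulVec {K : Type*} [TopologicalSpace K] [CompactSpace K]
    [MeasurableSpace K] [OpensMeasurableSpace K] (μ : Measure K) [IsFiniteMeasure μ]
    {A : K → Matrix σ σ ℝ} (hA : Continuous A) (p : MvPolynomial σ ℝ) :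
    ∃ q : MvPolynomial σ ℝ, ∀ v, eval v q = ∫ k, eval (A k *ᵥ v) p ∂μ := by
  set D := (genericLinearSubst p).support
  refine ⟨∑ m ∈ D, monomial m (∫ k, coeff m (linearSubst (A k) p) ∂μ), fun v => ?_⟩
  have hexpand : ∀ k, eval (A k *ᵥ v) p =
      ∑ m ∈ D, coeff m (linearSubst (A k) p) * ∏ i, v i ^ m i := by
    intro k
    rw [← eval_linearSubst, eval_eq']
    refine Finset.sum_subset (support_linearSubst_subset _ _) fun m _ hm => ?_
    rw [notMem_support_iff.mp hm, zero_mul]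
  have hint : ∀ m, Integrable (fun k => coeff m (linearSubst (A k) p)) μ := fun m =>
    ((continuous_coeff_linearSubst p m).comp hA).integrable_of_hasCompactSupport
      (HasCompactSupport.of_compactSpace _)
  simp only [hexpand, map_sum, eval_monomial, Finsupp.prod_pow]
  rw [integral_finsetSum _ fun m _ => (hint m).mul_const _]
  simp only [integral_mul_const]

end MvPolynomial

section StoneWeierstrass

variable {ι : Type*} [Fintype ι]

theorem exists_mvPolynomial_near_of_isCompact (f : C(EuclideanSpace ℝ ι, ℝ))
    {s : Set (EuclideanSpace ℝ ι)} (hs : IsCompact s) {ε : ℝ} (hε : 0 < ε) :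
    ∃ p : MvPolynomial ι ℝ, ∀ y ∈ s, |eval (fun i => y i) p - f y| < ε := by
  let coord : ι → C(EuclideanSpace ℝ ι, ℝ) := fun i =>
    (EuclideanSpace.proj i : EuclideanSpace ℝ ι →L[ℝ] ℝ)
  have heval : ∀ p y, aeval coord p y = eval (fun i => y i) p := by
    intro p y
    induction p using MvPolynomial.induction_on <;> simp_all [coord]
  have hsep : (aeval (R := ℝ) coord).range.SeparatesPoints := by
    intro y z hyz
    obtain ⟨i, hi⟩ : ∃ i, y i ≠ z i := by
      by_contra! h
      exact hyz (PiLp.ext h)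
    exact ⟨coord i, ⟨coord i, ⟨X i, aeval_X _ _⟩, rfl⟩, hi⟩
  obtain ⟨_, ⟨p, rfl⟩, hp⟩ :=
    ContinuousMap.exists_mem_subalgebra_near_continuous_of_isCompact_of_separatesPoints hsep f hs hε
  exact ⟨p, fun y hy => by simpa [heval] using hp y hy⟩

theorem exists_mvPolynomial_separating {s t : Set (EuclideanSpace ℝ ι)} (hs : IsCompact s)
    (ht : IsCompact t) (hst : Disjoint s t) :
    ∃ p : MvPolynomial ι ℝ, (∀ y ∈ s, eval (fun i => y i) p ≤ 1 / 3) ∧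
      ∀ y ∈ t, 2 / 3 ≤ eval (fun i => y i) p := by
  obtain ⟨f, hfs, hft, -⟩ := exists_continuous_zero_one_of_isCompact hs ht.isClosed hst
  obtain ⟨p, hp⟩ := exists_mvPolynomial_near_of_isCompact f (hs.union ht)
    (by norm_num : (0 : ℝ) < 1 / 3)
  refine ⟨p, fun y hy => ?_, fun y hy => ?_⟩
  · have := hp y (.inl hy)
    rw [hfs hy, Pi.zero_apply] at this
    linarith [abs_lt.mp this]
  · have := hp y (.inr hy)
    rw [hft hy, Pi.one_apply] at this
    linarith [abs_lt.mp this]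

end StoneWeierstrass

section Reynolds

variable {ι : Type*} [Fintype ι] [DecidableEq ι] {K : Type*} [Group K] [TopologicalSpace K]
  [IsTopologicalGroup K] [CompactSpace K]
  {φ : K →* (EuclideanSpace ℝ ι ≃ₗᵢ[ℝ] EuclideanSpace ℝ ι)}

theorem exists_invariant_eval_eq_integral
    (hφ : Continuous fun p : K × EuclideanSpace ℝ ι => φ p.1 p.2)
    [MeasurableSpace K] [BorelSpace K] (μ : Measure K) [IsFiniteMeasure μ]
    [μ.IsMulLeftInvariant] (p : MvPolynomial ι ℝ) :
    ∃ q : MvPolynomial ι ℝ,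
      (∀ (k : K) y, eval (fun i => (φ k y) i) q = eval (fun i => y i) q) ∧
      ∀ y, eval (fun i => y i) q = ∫ k, eval (fun i => (φ k⁻¹ y) i) p ∂μ := by
  let A : K → Matrix ι ι ℝ := fun k => (toLpLin 2 2).symm (φ k⁻¹).toLinearMap
  have hA : ∀ k y, (φ k⁻¹ y).ofLp = A k *ᵥ y.ofLp := fun k y => by
    rw [← toLin'_apply, ← ofLp_toLpLin 2 2, LinearEquiv.apply_symm_apply]; rfl
  have hA_cont : Continuous A := by
    refine continuous_pi fun i => continuous_pi fun j => ?_
    have hentry : ∀ k, A k i j = φ k⁻¹ (EuclideanSpace.single j 1) i := fun k => by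
      simp [A, toLpLin]
    simp only [hentry]
    fun_prop
  obtain ⟨q, hq⟩ := exists_eval_eq_integral_eval_mulVec μ hA_cont p
  have hq' : ∀ y, eval (fun i => y i) q = ∫ k, eval (fun i => (φ k⁻¹ y) i) p ∂μ := fun y => by
    simp only [hq, hA]
  refine ⟨q, fun k₀ y => ?_, hq'⟩
  rw [hq', hq']
  calc ∫ k, eval (fun i => (φ k⁻¹ (φ k₀ y)) i) p ∂μ
      = ∫ k, eval (fun i => (φ (k₀⁻¹ * k)⁻¹ y) i) p ∂μ := by
        simp only [_root_.mul_inv_rev, inv_inv, map_mul, LinearIsometryEquiv.coe_mul,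
          Function.comp_apply]
    _ = ∫ k, eval (fun i => (φ k⁻¹ y) i) p ∂μ :=
        integral_mul_left_eq_self (fun k => eval (fun i => (φ k⁻¹ y) i) p) k₀⁻¹

theorem exists_invariant_mvPolynomial_ne
    (hφ : Continuous fun p : K × EuclideanSpace ℝ ι => φ p.1 p.2) {x x' : EuclideanSpace ℝ ι}
    (hxx' : ∀ k, φ k x ≠ x') :
    ∃ q : MvPolynomial ι ℝ,
      (∀ (k : K) y, eval (fun i => (φ k y) i) q = eval (fun i => y i) q) ∧
      eval (fun i => x i) q ≠ eval (fun i => x' i) q := by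
  borelize K
  have horbit : ∀ y, Continuous fun k => φ k y := fun y => by fun_prop
  have hdisj : Disjoint (Set.range fun k => φ k x) (Set.range fun k => φ k x') := by
    refine Set.disjoint_left.mpr ?_
    rintro _ ⟨k, rfl⟩ ⟨k', hk'⟩
    refine hxx' (k'⁻¹ * k) ?_
    simp [map_mul, ← hk']
  obtain ⟨p, hpx, hpx'⟩ := exists_mvPolynomial_separating (isCompact_range (horbit x))
    (isCompact_range (horbit x')) hdisj
  let μ : Measure K := Measure.haar
  obtain ⟨q, hq_inv, hq⟩ := exists_invariant_eval_eq_integral hφ μ p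
  have hint : ∀ y, Integrable (fun k => eval (fun i => (φ k⁻¹ y) i) p) μ := fun y =>
    ((continuous_eval p).comp (by fun_prop)).integrable_of_hasCompactSupport
      (HasCompactSupport.of_compactSpace _)
  refine ⟨q, hq_inv, ne_of_lt ?_⟩
  rw [hq, hq]
  calc ∫ k, eval (fun i => (φ k⁻¹ x) i) p ∂μ
      ≤ ∫ _, 1 / 3 ∂μ := integral_mono (hint x) (integrable_const _) fun k => hpx _ ⟨k⁻¹, rfl⟩
    _ < ∫ _, 2 / 3 ∂μ := by
        simp only [integral_const, smul_eq_mul]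
        gcongr
        · exact measureReal_univ_pos
        · norm_num
    _ ≤ ∫ k, eval (fun i => (φ k⁻¹ x') i) p ∂μ :=
        integral_mono (integrable_const _) (hint x') fun k => hpx' _ ⟨k⁻¹, rfl⟩

end Reynolds

/-- For K a compact group acting on ℝⁿ by linear isometries and ρ₁,…,ρ_ℓ a generating
set of the algebra of K-invariant polynomials, the map ρ = (ρ₁,…,ρ_ℓ) separates
K-orbits: ρ(x) = ρ(x') iff x' = k·x for some k ∈ K. -/
theorem stmt_10 {n ℓ : ℕ} {K : Type*} [Group K] [TopologicalSpace K] [IsTopologicalGroup K]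
    [CompactSpace K]
    (φ : K →* (EuclideanSpace ℝ (Fin n) ≃ₗᵢ[ℝ] EuclideanSpace ℝ (Fin n)))
    (hφ : Continuous fun p : K × EuclideanSpace ℝ (Fin n) => φ p.1 p.2)
    (ρ : Fin ℓ → MvPolynomial (Fin n) ℝ)
    (hρinv : ∀ j, ∀ (k : K) (x : EuclideanSpace ℝ (Fin n)),
      MvPolynomial.eval (fun i => (φ k x) i) (ρ j) = MvPolynomial.eval (fun i => x i) (ρ j))
    (hgen : ∀ p : MvPolynomial (Fin n) ℝ,
      (∀ (k : K) (x : EuclideanSpace ℝ (Fin n)),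
        MvPolynomial.eval (fun i => (φ k x) i) p = MvPolynomial.eval (fun i => x i) p) →
      p ∈ Algebra.adjoin ℝ (Set.range ρ)) :
    ∀ x x' : EuclideanSpace ℝ (Fin n),
      (∀ j, MvPolynomial.eval (fun i => x i) (ρ j) = MvPolynomial.eval (fun i => x' i) (ρ j))
        ↔ ∃ k : K, φ k x = x' := by
  intro x x'
  refine ⟨fun hρ => ?_, ?_⟩
  · by_contra! hxx'
    obtain ⟨q, hq_inv, hq_ne⟩ := exists_invariant_mvPolynomial_ne hφ hxx'
    exact hq_ne (eval_eq_of_mem_adjoin (Set.forall_mem_range.mpr hρ) (hgen q hq_inv))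
  · rintro ⟨k, rfl⟩ j
    exact (hρinv j k x).symm
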